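/- Let C₁,…,C₅ be five pairwise disjoint maximal commuting Pauli classes in dimension d = 8, and let S be a maximal commuting Pauli class, not equal up to phase (as a set of operators) to any Cᵢ, such that every member of S is equal up to phase to a member of C₁ ∪ ⋯ ∪ C₅. Then there is exactly one index i such that S contains, up to phase, exactly three members of Cᵢ and exactly one member of each Cⱼ with j ≠ i; moreover the three members shared with Cᵢ are of the form U, V, and (up to phase) UV. -/

import Mathlib

open Matrix

noncomputable section

/-- Matrices on the Hilbert space of `n` qubits, with rows and columns indexed by
bit strings `Fin n → Fin 2`. -/
abbrev QMat (n : ℕ) := Matrix (Fin n → Fin 2) (Fin n → Fin 2) ℂ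

/-- The single-qubit identity. -/
def pI : Matrix (Fin 2) (Fin 2) ℂ := 1

/-- The single-qubit Pauli X. -/
def pX : Matrix (Fin 2) (Fin 2) ℂ := !![0, 1; 1, 0]

/-- The single-qubit Pauli Y. -/
def pY : Matrix (Fin 2) (Fin 2) ℂ := !![0, -Complex.I; Complex.I, 0]

/-- The single-qubit Pauli Z. -/
def pZ : Matrix (Fin 2) (Fin 2) ℂ := !![1, 0; 0, -1]

/-- The `n`-fold Kronecker product `W 0 ⊗ ⋯ ⊗ W (n-1)`, realized on indices
`Fin n → Fin 2`. -/
def kron (n : ℕ) (W : Fin n → Matrix (Fin 2) (Fin 2) ℂ) : QMat n :=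
  fun v w => ∏ j, W j (v j) (w j)

/-- `M` is an `n`-qubit Pauli operator: an `n`-fold Kronecker product of matrices
from `{I₂, X, Y, Z}`. -/
def IsPauliOp (n : ℕ) (M : QMat n) : Prop :=
  ∃ W : Fin n → Matrix (Fin 2) (Fin 2) ℂ,
    (∀ j, W j = pI ∨ W j = pX ∨ W j = pY ∨ W j = pZ) ∧ M = kron n W

/-- Two matrices are equal up to phase if one is a nonzero scalar multiple of the other. -/
def PhaseEq {m : Type*} (A B : Matrix m m ℂ) : Prop := ∃ c : ℂ, c ≠ 0 ∧ A = c • B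

/-- A maximal commuting Pauli class in dimension `d = 2 ^ n`: a set of `d - 1`
pairwise commuting non-identity `n`-qubit Pauli operators, pairwise distinct up to phase. -/
def IsMaxClass (n : ℕ) (C : Set (QMat n)) : Prop :=
  C.Finite ∧ C.ncard = 2 ^ n - 1 ∧
  (∀ U ∈ C, IsPauliOp n U ∧ U ≠ 1) ∧
  (∀ U ∈ C, ∀ V ∈ C, U * V = V * U) ∧
  (∀ U ∈ C, ∀ V ∈ C, U ≠ V → ¬ PhaseEq U V)

/-- Two classes are disjoint if no member of one is equal up to phase to a member of the other. -/
def ClassDisjoint {n : ℕ} (C D : Set (QMat n)) : Prop :=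
  ∀ U ∈ C, ∀ V ∈ D, ¬ PhaseEq U V

/-- Two classes are equal up to phase (as sets of operators). -/
def ClassPhaseEq {n : ℕ} (C D : Set (QMat n)) : Prop :=
  (∀ U ∈ C, ∃ V ∈ D, PhaseEq U V) ∧ (∀ V ∈ D, ∃ U ∈ C, PhaseEq U V)

/-- The standard Hermitian inner product on `ι → ℂ` (conjugate-linear in the first slot). -/
def cinner {ι : Type*} [Fintype ι] (x y : ι → ℂ) : ℂ :=
  ∑ k, (starRingEnd ℂ) (x k) * y k

/-!
Label an `n`-qubit Pauli operator, up to phase, by its binary vector in `(𝔽₂ × 𝔽₂)ⁿ`: equality up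
to phase becomes equality of labels, multiplication becomes addition, and commutation becomes
vanishing of the symplectic form. A maximal commuting class is then exactly the set of nonzero
vectors of a Lagrangian subspace, of dimension `n`.

For `d = 8`, the label space of `T` meets that of `Cᵢ` in a subspace of dimension `kᵢ ≤ 2` (since
`T ≠ Cᵢ`); these intersections pairwise meet only in `0` (the `Cᵢ` are disjoint) and cover `T`, so
`∑ (2 ^ kᵢ - 1) = 7`. Two planes in a `3`-space meet nontrivially, so at most one `kᵢ` is `2`, which
forces the pattern `3 + 1 + 1 + 1 + 1`; the three shared operators are labelled by the nonzero
vectors `u`, `v`, `u + v` of a plane.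
-/

open Module

lemma PhaseEq.refl {m : Type*} (A : Matrix m m ℂ) : PhaseEq A A :=
  ⟨1, one_ne_zero, (one_smul ℂ A).symm⟩

lemma PhaseEq.symm {m : Type*} {A B : Matrix m m ℂ} (h : PhaseEq A B) : PhaseEq B A := by
  obtain ⟨c, hc, rfl⟩ := h
  exact ⟨c⁻¹, inv_ne_zero hc, by rw [smul_smul, inv_mul_cancel₀ hc, one_smul]⟩

lemma PhaseEq.trans {m : Type*} {A B D : Matrix m m ℂ} (h₁ : PhaseEq A B) (h₂ : PhaseEq B D) :
    PhaseEq A D := by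
  obtain ⟨c, hc, rfl⟩ := h₂
  obtain ⟨d, hd, rfl⟩ := h₁
  exact ⟨d * c, mul_ne_zero hd hc, smul_smul d c D⟩

lemma zmod_two_cases (a : ZMod 2) : a = 0 ∨ a = 1 := by
  revert a; decide

lemma zmod_two_prod_cases (v : ZMod 2 × ZMod 2) :
    v = (0, 0) ∨ v = (0, 1) ∨ v = (1, 0) ∨ v = (1, 1) := by
  revert v; decide

lemma prod_neg_one_pow_val {ι R : Type*} [Fintype ι] [CommRing R] (f : ι → ZMod 2) :
    ∏ i, (-1 : R) ^ (f i).val = (-1) ^ (∑ i, f i).val := by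
  rw [Finset.prod_pow_eq_pow_sum, neg_one_pow_eq_pow_mod_two, ← ZMod.val_natCast, Nat.cast_sum]
  simp only [ZMod.natCast_zmod_val]

section SingleQubit

/-- The single-qubit Pauli with label `(x, z)`: it is `X^x Z^z` up to phase. -/
def pauli (v : ZMod 2 × ZMod 2) : Matrix (Fin 2) (Fin 2) ℂ :=
  if v.1 = 0 then (if v.2 = 0 then pI else pZ) else (if v.2 = 0 then pX else pY)

lemma exists_pauli_eq_iff (P : Matrix (Fin 2) (Fin 2) ℂ) :
    (∃ v, pauli v = P) ↔ P = pI ∨ P = pX ∨ P = pY ∨ P = pZ := by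
  constructor
  · rintro ⟨v, rfl⟩
    rcases zmod_two_prod_cases v with rfl | rfl | rfl | rfl <;> simp [pauli]
  · rintro (rfl | rfl | rfl | rfl)
    exacts [⟨(0, 0), rfl⟩, ⟨(1, 0), rfl⟩, ⟨(1, 1), rfl⟩, ⟨(0, 1), rfl⟩]

lemma pauli_mul_self (v : ZMod 2 × ZMod 2) : pauli v * pauli v = 1 := by
  rcases zmod_two_prod_cases v with rfl | rfl | rfl | rfl <;> ext i j <;> fin_cases i <;>
    fin_cases j <;> simp [pauli, pI, pX, pY, pZ, Matrix.mul_apply, Fin.sum_univ_two]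

lemma trace_pauli_mul (u v : ZMod 2 × ZMod 2) :
    (pauli u * pauli v).trace = if u = v then 2 else 0 := by
  rcases zmod_two_prod_cases u with rfl | rfl | rfl | rfl <;>
    rcases zmod_two_prod_cases v with rfl | rfl | rfl | rfl <;>
    simp +decide [pauli, pI, pX, pY, pZ, Matrix.trace, Fin.sum_univ_two] <;> norm_num

lemma pauli_mul (u v : ZMod 2 × ZMod 2) :
    ∃ c : ℂ, c ≠ 0 ∧ pauli u * pauli v = c • pauli (u + v) := by
  rcases zmod_two_prod_cases u with rfl | rfl | rfl | rfl <;>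
    rcases zmod_two_prod_cases v with rfl | rfl | rfl | rfl <;>
    first
    | (refine ⟨1, one_ne_zero, ?_⟩; ext i j; fin_cases i <;> fin_cases j <;>
        simp +decide [pauli, pI, pX, pY, pZ, Matrix.mul_apply, Fin.sum_univ_two]; done)
    | (refine ⟨Complex.I, Complex.I_ne_zero, ?_⟩; ext i j; fin_cases i <;> fin_cases j <;>
        simp +decide [pauli, pX, pY, pZ, Matrix.mul_apply, Fin.sum_univ_two]; done)
    | (refine ⟨-Complex.I, neg_ne_zero.2 Complex.I_ne_zero, ?_⟩; ext i j; fin_cases i <;>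
        fin_cases j <;> simp +decide [pauli, pX, pY, pZ, Matrix.mul_apply, Fin.sum_univ_two])

lemma pauli_mul_comm (u v : ZMod 2 × ZMod 2) :
    pauli v * pauli u = (-1 : ℂ) ^ (u.1 * v.2 + u.2 * v.1).val • (pauli u * pauli v) := by
  rcases zmod_two_prod_cases u with rfl | rfl | rfl | rfl <;>
    rcases zmod_two_prod_cases v with rfl | rfl | rfl | rfl <;>
    ext i j <;> fin_cases i <;> fin_cases j <;>
    simp +decide [pauli, pI, pX, pY, pZ, Matrix.mul_apply, Fin.sum_univ_two]

end SingleQubit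

section Kron

variable {n : ℕ}

lemma kron_mul (W W' : Fin n → Matrix (Fin 2) (Fin 2) ℂ) :
    kron n W * kron n W' = kron n (W * W') := by
  ext v w
  simp only [Matrix.mul_apply, kron, Pi.mul_apply, ← Finset.prod_mul_distrib]
  rw [Finset.prod_univ_sum, Fintype.piFinset_univ]

lemma kron_smul (c : Fin n → ℂ) (W : Fin n → Matrix (Fin 2) (Fin 2) ℂ) :
    kron n (c • W) = (∏ j, c j) • kron n W := by
  ext v w
  simp only [kron, Pi.smul_apply', Matrix.smul_apply, smul_eq_mul, Finset.prod_mul_distrib]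

lemma kron_one : kron n 1 = 1 := by
  ext v w
  simp only [kron, Pi.one_apply, Matrix.one_apply, Finset.prod_boole]
  simp [funext_iff]

lemma trace_kron (W : Fin n → Matrix (Fin 2) (Fin 2) ℂ) :
    (kron n W).trace = ∏ j, (W j).trace := by
  simp only [Matrix.trace, Matrix.diag, kron]
  rw [Finset.prod_univ_sum, Fintype.piFinset_univ]

end Kron

section SymplecticForm

def symplecticForm (n : ℕ) : LinearMap.BilinForm (ZMod 2) (Fin n → ZMod 2 × ZMod 2) :=
  LinearMap.mk₂ (ZMod 2) (fun u v => ∑ j, ((u j).1 * (v j).2 + (u j).2 * (v j).1))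
    (fun _ _ _ => by
      simp only [← Finset.sum_add_distrib, Pi.add_apply, Prod.fst_add, Prod.snd_add]
      exact Finset.sum_congr rfl fun _ _ => by ring)
    (fun _ _ _ => by
      simp only [Finset.mul_sum, Pi.smul_apply, Prod.smul_fst, Prod.smul_snd, smul_eq_mul]
      exact Finset.sum_congr rfl fun _ _ => by ring)
    (fun _ _ _ => by
      simp only [← Finset.sum_add_distrib, Pi.add_apply, Prod.fst_add, Prod.snd_add]
      exact Finset.sum_congr rfl fun _ _ => by ring)
    (fun _ _ _ => by
      simp only [Finset.mul_sum, Pi.smul_apply, Prod.smul_fst, Prod.smul_snd, smul_eq_mul]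
      exact Finset.sum_congr rfl fun _ _ => by ring)

variable {n : ℕ}

lemma symplecticForm_apply (u v : Fin n → ZMod 2 × ZMod 2) :
    symplecticForm n u v = ∑ j, ((u j).1 * (v j).2 + (u j).2 * (v j).1) := rfl

lemma symplecticForm_isSymm : (symplecticForm n).IsSymm :=
  LinearMap.BilinForm.isSymm_def.2 fun u v => by
    simp only [symplecticForm_apply]
    exact Finset.sum_congr rfl fun j _ => by ring

lemma symplecticForm_nondegenerate : (symplecticForm n).Nondegenerate := by
  refine symplecticForm_isSymm.isRefl.nondegenerate_iff_separatingLeft.2 fun u hu => ?_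
  have hsingle (j : Fin n) (w : ZMod 2 × ZMod 2) :
      symplecticForm n u (Pi.single j w) = (u j).1 * w.2 + (u j).2 * w.1 := by
    rw [symplecticForm_apply, Finset.sum_eq_single j (fun k _ hk => by simp [hk]) (by simp)]
    simp
  funext j
  have hz := hu (Pi.single j (0, 1))
  have hx := hu (Pi.single j (1, 0))
  rw [hsingle] at hz hx
  simp only [mul_one, mul_zero, add_zero, zero_add] at hz hx
  exact Prod.ext hz hx

lemma finrank_fin_zmod_two_prod : finrank (ZMod 2) (Fin n → ZMod 2 × ZMod 2) = 2 * n := by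
  simp [Module.finrank_pi_fintype, Module.finrank_prod, mul_comm]

end SymplecticForm

section PauliString

variable {n : ℕ}

def pauliString (v : Fin n → ZMod 2 × ZMod 2) : QMat n := kron n fun j => pauli (v j)

lemma isPauliOp_iff_exists_pauliString (M : QMat n) :
    IsPauliOp n M ↔ ∃ v, pauliString v = M := by
  constructor
  · rintro ⟨W, hW, rfl⟩
    choose v hv using fun j => (exists_pauli_eq_iff (W j)).2 (hW j)
    exact ⟨v, congrArg (kron n) (funext hv)⟩
  · rintro ⟨v, rfl⟩
    exact ⟨_, fun j => (exists_pauli_eq_iff _).1 ⟨v j, rfl⟩, rfl⟩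

lemma pauliString_zero : pauliString (0 : Fin n → ZMod 2 × ZMod 2) = 1 := kron_one

lemma pauliString_mul_self (v : Fin n → ZMod 2 × ZMod 2) :
    pauliString v * pauliString v = 1 := by
  rw [pauliString, kron_mul]
  exact (congrArg (kron n) (funext fun j => pauli_mul_self (v j))).trans kron_one

lemma pauliString_mul (u v : Fin n → ZMod 2 × ZMod 2) :
    ∃ c : ℂ, c ≠ 0 ∧ pauliString u * pauliString v = c • pauliString (u + v) := by
  choose c hc h using fun j => pauli_mul (u j) (v j)
  refine ⟨∏ j, c j, Finset.prod_ne_zero_iff.2 fun j _ => hc j, ?_⟩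
  simp only [pauliString, kron_mul]
  exact (congrArg (kron n) (funext h)).trans (kron_smul _ _)

lemma pauliString_mul_comm (u v : Fin n → ZMod 2 × ZMod 2) :
    pauliString v * pauliString u =
      (-1 : ℂ) ^ (symplecticForm n u v).val • (pauliString u * pauliString v) := by
  simp only [pauliString, kron_mul, symplecticForm_apply, ← prod_neg_one_pow_val]
  exact (congrArg (kron n) (funext fun j => pauli_mul_comm (u j) (v j))).trans (kron_smul _ _)

lemma trace_pauliString_mul (u v : Fin n → ZMod 2 × ZMod 2) :
    (pauliString u * pauliString v).trace = if u = v then 2 ^ n else 0 := by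
  rw [pauliString, pauliString, kron_mul, trace_kron]
  simp only [Pi.mul_apply, trace_pauli_mul]
  split_ifs with h
  · simp [h]
  · obtain ⟨j, hj⟩ := Function.ne_iff.1 h
    exact Finset.prod_eq_zero (Finset.mem_univ j) (if_neg hj)

lemma phaseEq_pauliString_iff {u v : Fin n → ZMod 2 × ZMod 2} :
    PhaseEq (pauliString u) (pauliString v) ↔ u = v := by
  refine ⟨fun ⟨c, hc, h⟩ => ?_, fun h => h ▸ PhaseEq.refl _⟩
  have htr := trace_pauliString_mul u v
  rw [h, Matrix.smul_mul, Matrix.trace_smul, trace_pauliString_mul, if_pos rfl] at htr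
  by_contra huv
  rw [if_neg huv, smul_eq_mul] at htr
  exact mul_ne_zero hc (pow_ne_zero n two_ne_zero) htr

lemma pauliString_injective : Function.Injective (pauliString (n := n)) := fun u v h =>
  phaseEq_pauliString_iff.1 ⟨1, one_ne_zero, by rw [h, one_smul]⟩

lemma symplecticForm_eq_zero_of_commute {u v : Fin n → ZMod 2 × ZMod 2}
    (h : pauliString u * pauliString v = pauliString v * pauliString u) :
    symplecticForm n u v = 0 := by
  have hinv : pauliString u * pauliString v * (pauliString v * pauliString u) = 1 := by
    rw [mul_assoc, ← mul_assoc (pauliString v), pauliString_mul_self, one_mul,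
      pauliString_mul_self]
  have hsign : (-1 : ℂ) ^ (symplecticForm n u v).val = 1 := by
    have hfix := pauliString_mul_comm u v
    rw [← h] at hfix
    have : (1 - (-1 : ℂ) ^ (symplecticForm n u v).val) • (pauliString u * pauliString v) = 0 := by
      rw [sub_smul, one_smul, sub_eq_zero]
      exact hfix
    exact (sub_eq_zero.1 ((smul_eq_zero.1 this).resolve_right
      (left_ne_zero_of_mul_eq_one hinv))).symm
  rcases zmod_two_cases (symplecticForm n u v) with h0 | h1
  · exact h0
  · rw [h1, show (1 : ZMod 2).val = 1 from rfl] at hsign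
    norm_num at hsign

end PauliString

section Subspaces

variable {K V : Type*} [Field K] [AddCommGroup V] [Module K V] [FiniteDimensional K V]

lemma ncard_coe_sdiff_zero [Finite K] (W : Submodule K V) :
    ((W : Set V) \ {0}).ncard = Nat.card K ^ finrank K W - 1 := by
  rw [Set.ncard_sdiff_singleton_of_mem W.zero_mem, ← Nat.card_coe_set_eq, SetLike.coe_sort_coe,
    Module.natCard_eq_pow_finrank (K := K)]

lemma two_mul_finrank_span_le_of_isotropic {B : LinearMap.BilinForm K V} (hB : B.Nondegenerate)
    {s : Set V} (hs : ∀ x ∈ s, ∀ y ∈ s, B x y = 0) :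
    2 * finrank K (Submodule.span K s) ≤ finrank K V := by
  have hle : Submodule.span K s ≤ B.orthogonal (Submodule.span K s) :=
    Submodule.span_le.2 fun x hx => LinearMap.BilinForm.mem_orthogonal_iff.2 fun y hy =>
      (Submodule.span_le (p := LinearMap.ker (B.flip x))).2
        (fun z hz => LinearMap.mem_ker.2 (hs z hz x hx)) hy
  have := Submodule.finrank_mono hle
  rw [LinearMap.BilinForm.finrank_orthogonal hB] at this
  omega

lemma eq_span_sdiff_zero_of_isotropic [Finite K] {B : LinearMap.BilinForm K V}
    (hB : B.Nondegenerate) {n : ℕ} (hV : finrank K V = 2 * n) {s : Set V}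
    (hs : ∀ x ∈ s, ∀ y ∈ s, B x y = 0) (h0 : 0 ∉ s) (hcard : s.ncard = Nat.card K ^ n - 1) :
    s = (Submodule.span K s : Set V) \ {0} ∧ finrank K (Submodule.span K s) = n := by
  have hk : finrank K (Submodule.span K s) ≤ n := by
    have := two_mul_finrank_span_le_of_isotropic hB hs
    omega
  have hq : 1 < Nat.card K := Finite.one_lt_card
  have hpow : Nat.card K ^ finrank K (Submodule.span K s) ≤ Nat.card K ^ n :=
    Nat.pow_le_pow_right (by omega) hk
  have heq : s = (Submodule.span K s : Set V) \ {0} := by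
    have := Module.finite_of_finite K (M := V)
    refine Set.eq_of_subset_of_ncard_le (fun x hx => ⟨Submodule.subset_span hx, ?_⟩) ?_
    · rintro rfl
      exact h0 hx
    · rw [ncard_coe_sdiff_zero, hcard]
      omega
  refine ⟨heq, ?_⟩
  have hcard' := hcard
  rw [heq, ncard_coe_sdiff_zero] at hcard'
  have := Nat.one_le_pow (finrank K (Submodule.span K s)) (Nat.card K) (by omega)
  have := Nat.one_le_pow n (Nat.card K) (by omega)
  exact Nat.pow_right_injective hq (by dsimp only; omega)

lemma finrank_inf_lt_of_ne {L M : Submodule K V} (h : finrank K L = finrank K M) (hne : L ≠ M) :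
    finrank K ↥(L ⊓ M) < finrank K L := by
  refine lt_of_le_of_ne (Submodule.finrank_mono inf_le_left) fun heq => hne ?_
  have hL : L ⊓ M = L := Submodule.eq_of_le_of_finrank_eq inf_le_left heq
  exact Submodule.eq_of_le_of_finrank_eq (hL ▸ inf_le_right) h

lemma finrank_add_finrank_le_of_disjoint_of_le {A B L : Submodule K V} (hA : A ≤ L) (hB : B ≤ L)
    (h : Disjoint A B) : finrank K A + finrank K B ≤ finrank K L := by
  rw [← Submodule.finrank_sup_add_finrank_inf_eq, h.eq_bot, finrank_bot, add_zero]
  exact Submodule.finrank_mono (sup_le hA hB)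

end Subspaces

section Classes

variable {n : ℕ}

def pauliLabels (C : Set (QMat n)) : Set (Fin n → ZMod 2 × ZMod 2) := pauliString ⁻¹' C

def labelSpan (C : Set (QMat n)) : Submodule (ZMod 2) (Fin n → ZMod 2 × ZMod 2) :=
  Submodule.span (ZMod 2) (pauliLabels C)

lemma image_pauliLabels {C : Set (QMat n)} (hC : ∀ U ∈ C, IsPauliOp n U) :
    pauliString '' pauliLabels C = C :=
  Set.image_preimage_eq_of_subset fun U hU =>
    (isPauliOp_iff_exists_pauliString U).1 (hC U hU)

lemma sep_phaseEq_eq_image {T D : Set (QMat n)} (hT : ∀ U ∈ T, IsPauliOp n U)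
    (hD : ∀ V ∈ D, IsPauliOp n V) :
    {x ∈ T | ∃ y ∈ D, PhaseEq x y} = pauliString '' (pauliLabels T ∩ pauliLabels D) := by
  ext x
  constructor
  · rintro ⟨hx, y, hy, hxy⟩
    obtain ⟨u, rfl⟩ := (isPauliOp_iff_exists_pauliString x).1 (hT x hx)
    obtain ⟨v, rfl⟩ := (isPauliOp_iff_exists_pauliString y).1 (hD y hy)
    obtain rfl := phaseEq_pauliString_iff.1 hxy
    exact ⟨u, ⟨hx, hy⟩, rfl⟩
  · rintro ⟨u, ⟨hu, hu'⟩, rfl⟩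
    exact ⟨hu, _, hu', PhaseEq.refl _⟩

lemma ncard_eq_sum_ncard_sep_phaseEq {ι : Type*} [Fintype ι] {T : Set (QMat n)}
    {C : ι → Set (QMat n)} (hT : T.Finite) (hdisj : Pairwise fun i j => ClassDisjoint (C i) (C j))
    (hcover : ∀ U ∈ T, ∃ i, ∃ V ∈ C i, PhaseEq U V) :
    T.ncard = ∑ i, {x ∈ T | ∃ y ∈ C i, PhaseEq x y}.ncard := by
  have hunion : ⋃ i, {x ∈ T | ∃ y ∈ C i, PhaseEq x y} = T := by
    ext x
    simp only [Set.mem_iUnion]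
    exact ⟨fun ⟨_, hx, _⟩ => hx, fun hx => (hcover x hx).imp fun _ h => ⟨hx, h⟩⟩
  rw [← finsum_eq_sum_of_fintype,
    ← Set.ncard_iUnion_of_finite (fun i => hT.subset (Set.sep_subset _ _)), hunion]
  intro i j hij
  refine Set.disjoint_left.2 fun x ⟨_, y, hy, hxy⟩ ⟨_, z, hz, hxz⟩ => ?_
  exact hdisj hij y hy z hz (hxy.symm.trans hxz)

namespace IsMaxClass

variable {C D T : Set (QMat n)}

lemma isPauliOp (hC : IsMaxClass n C) {U : QMat n} (hU : U ∈ C) : IsPauliOp n U :=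
  (hC.2.2.1 U hU).1

lemma pauliLabels_eq_and_finrank (hC : IsMaxClass n C) :
    pauliLabels C = (labelSpan C : Set _) \ {0} ∧ finrank (ZMod 2) (labelSpan C) = n := by
  obtain ⟨-, hcard, hmem, hcomm, -⟩ := hC
  refine eq_span_sdiff_zero_of_isotropic symplecticForm_nondegenerate finrank_fin_zmod_two_prod
    (fun u hu v hv => symplecticForm_eq_zero_of_commute (hcomm _ hu _ hv))
    (fun h0 => (hmem _ h0).2 pauliString_zero) ?_
  rw [Nat.card_zmod, ← hcard, ← Set.ncard_image_of_injective _ pauliString_injective,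
    image_pauliLabels fun U hU => (hmem U hU).1]

lemma pauliLabels_eq (hC : IsMaxClass n C) : pauliLabels C = (labelSpan C : Set _) \ {0} :=
  hC.pauliLabels_eq_and_finrank.1

lemma finrank_labelSpan (hC : IsMaxClass n C) : finrank (ZMod 2) (labelSpan C) = n :=
  hC.pauliLabels_eq_and_finrank.2

lemma pauliLabels_inter (hT : IsMaxClass n T) (hD : IsMaxClass n D) :
    pauliLabels T ∩ pauliLabels D =
      ((labelSpan T ⊓ labelSpan D : Submodule _ _) : Set _) \ {0} := by
  rw [hT.pauliLabels_eq, hD.pauliLabels_eq, Submodule.coe_inf]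
  ext
  simp only [Set.mem_inter_iff, Set.mem_sdiff]
  tauto

lemma ncard_sep_phaseEq (hT : IsMaxClass n T) (hD : IsMaxClass n D) :
    {x ∈ T | ∃ y ∈ D, PhaseEq x y}.ncard =
      2 ^ finrank (ZMod 2) ↥(labelSpan T ⊓ labelSpan D) - 1 := by
  rw [sep_phaseEq_eq_image (fun _ => hT.isPauliOp) (fun _ => hD.isPauliOp),
    Set.ncard_image_of_injective _ pauliString_injective, hT.pauliLabels_inter hD,
    ncard_coe_sdiff_zero, Nat.card_zmod]

lemma finrank_inf_labelSpan_lt (hT : IsMaxClass n T) (hD : IsMaxClass n D)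
    (h : ¬ ClassPhaseEq T D) : finrank (ZMod 2) ↥(labelSpan T ⊓ labelSpan D) < n := by
  have hne : labelSpan T ≠ labelSpan D := fun hTD => h <| by
    obtain rfl : T = D := by
      rw [← image_pauliLabels (fun _ => hT.isPauliOp), ← image_pauliLabels (fun _ => hD.isPauliOp),
        hT.pauliLabels_eq, hD.pauliLabels_eq, hTD]
    exact ⟨fun U hU => ⟨U, hU, PhaseEq.refl U⟩, fun U hU => ⟨U, hU, PhaseEq.refl U⟩⟩
  simpa only [hT.finrank_labelSpan] using
    finrank_inf_lt_of_ne (hT.finrank_labelSpan.trans hD.finrank_labelSpan.symm) hne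

lemma labelSpan_inf_eq_bot (hC : IsMaxClass n C) (hD : IsMaxClass n D) (h : ClassDisjoint C D) :
    labelSpan C ⊓ labelSpan D = ⊥ := by
  refine (Submodule.eq_bot_iff _).2 fun v hv => by_contra fun hv0 => ?_
  have hvC : v ∈ pauliLabels C := hC.pauliLabels_eq ▸ ⟨hv.1, hv0⟩
  have hvD : v ∈ pauliLabels D := hD.pauliLabels_eq ▸ ⟨hv.2, hv0⟩
  exact h _ hvC _ hvD (PhaseEq.refl _)

lemma finrank_inf_add_finrank_inf_le (hT : IsMaxClass n T) (hC : IsMaxClass n C)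
    (hD : IsMaxClass n D) (h : ClassDisjoint C D) :
    finrank (ZMod 2) ↥(labelSpan T ⊓ labelSpan C) +
      finrank (ZMod 2) ↥(labelSpan T ⊓ labelSpan D) ≤ n := by
  refine (finrank_add_finrank_le_of_disjoint_of_le inf_le_left inf_le_left ?_).trans_eq
    hT.finrank_labelSpan
  exact Disjoint.mono inf_le_right inf_le_right (disjoint_iff.2 (hC.labelSpan_inf_eq_bot hD h))

lemma exists_phaseEq_mul_mem_sep (hT : IsMaxClass n T) (hD : IsMaxClass n D) {U V : QMat n}
    (hU : U ∈ {x ∈ T | ∃ y ∈ D, PhaseEq x y}) (hV : V ∈ {x ∈ T | ∃ y ∈ D, PhaseEq x y})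
    (hUV : U ≠ V) :
    ∃ W ∈ {x ∈ T | ∃ y ∈ D, PhaseEq x y}, W ≠ U ∧ W ≠ V ∧ PhaseEq W (U * V) := by
  rw [sep_phaseEq_eq_image (fun _ => hT.isPauliOp) (fun _ => hD.isPauliOp),
    hT.pauliLabels_inter hD] at hU hV ⊢
  obtain ⟨u, ⟨hu, hu0⟩, rfl⟩ := hU
  obtain ⟨v, ⟨hv, hv0⟩, rfl⟩ := hV
  have hvv : v + v = 0 := by
    rw [← two_smul (ZMod 2), show (2 : ZMod 2) = 0 from rfl, zero_smul]
  have huv0 : u + v ≠ 0 := fun h =>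
    hUV (congrArg pauliString (add_right_cancel (h.trans hvv.symm)))
  obtain ⟨c, hc, hmul⟩ := pauliString_mul u v
  refine ⟨_, ⟨u + v, ⟨add_mem hu hv, huv0⟩, rfl⟩, ?_, ?_, PhaseEq.symm ⟨c, hc, hmul⟩⟩
  · exact fun h => hv0 (add_eq_left.1 (pauliString_injective h))
  · exact fun h => hu0 (add_eq_right.1 (pauliString_injective h))

lemma exists_eq_triple_phaseEq_mul (hT : IsMaxClass n T) (hD : IsMaxClass n D)
    (h : {x ∈ T | ∃ y ∈ D, PhaseEq x y}.ncard = 3) :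
    ∃ U V W : QMat n, {x ∈ T | ∃ y ∈ D, PhaseEq x y} = {U, V, W} ∧ PhaseEq W (U * V) := by
  obtain ⟨U, V, W, hUV, hUW, hVW, hS⟩ := Set.ncard_eq_three.1 h
  obtain ⟨W', hW', hW'U, hW'V, hW'UV⟩ :=
    hT.exists_phaseEq_mul_mem_sep hD (hS ▸ by simp) (hS ▸ by simp) hUV
  rw [hS] at hW'
  obtain rfl | rfl | rfl := hW'
  · exact absurd rfl hW'U
  · exact absurd rfl hW'V
  · exact ⟨U, V, W', hS, hW'UV⟩

end IsMaxClass

end Classes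

lemma exists_unique_eq_three_of_sum {ι : Type*} [Fintype ι] (m : ι → ℕ)
    (hsum : ∑ i, m i = Fintype.card ι + 2) (hm : ∀ i, m i ≤ 1 ∨ m i = 3)
    (hthree : ∀ i j, m i = 3 → m j = 3 → i = j) :
    ∃! i, m i = 3 ∧ ∀ j, j ≠ i → m j = 1 := by
  classical
  obtain ⟨i, hi⟩ : ∃ i, m i = 3 := by
    by_contra! h
    have : ∑ i, m i ≤ ∑ _i : ι, 1 := Finset.sum_le_sum fun i _ => (hm i).resolve_right (h i)
    simp only [Finset.sum_const, Finset.card_univ, smul_eq_mul, mul_one] at this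
    omega
  have hrest : ∑ j ∈ Finset.univ.erase i, m j = ∑ j ∈ Finset.univ.erase i, 1 := by
    have := Finset.add_sum_erase Finset.univ m (Finset.mem_univ i)
    simp only [Finset.sum_const, Finset.mem_univ, Finset.card_erase_of_mem, Finset.card_univ,
      smul_eq_mul, mul_one]
    omega
  have hle : ∀ j ∈ Finset.univ.erase i, m j ≤ 1 := fun j hj =>
    (hm j).resolve_right fun h3 => Finset.ne_of_mem_erase hj (hthree j i h3 hi)
  refine ⟨i, ⟨hi, fun j hj => (Finset.sum_eq_sum_iff_of_le hle).1 hrest j ?_⟩,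
    fun j hj => hthree j i hj.1 hi⟩
  exact Finset.mem_erase.2 ⟨hj, Finset.mem_univ j⟩

/-- If `T` is a maximal commuting Pauli class, not equal up to phase to any
of five pairwise disjoint maximal commuting Pauli classes `C 0, …, C 4` in `d = 8`, all of
whose members are equal up to phase to members of `C 0 ∪ ⋯ ∪ C 4`, then there is exactly
one index `i` such that `T` shares (up to phase) exactly three members with `C i` and
exactly one with each `C j`, `j ≠ i`; the three shared members are `U`, `V`, and (up to
phase) `U * V`. -/
theorem extra_class_structure_d8 (C : Fin 5 → Set (QMat 3))
    (hmax : ∀ i, IsMaxClass 3 (C i))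
    (hdisj : ∀ i j, i ≠ j → ClassDisjoint (C i) (C j))
    (T : Set (QMat 3)) (hT : IsMaxClass 3 T)
    (hne : ∀ i, ¬ ClassPhaseEq T (C i))
    (hsub : ∀ U ∈ T, ∃ i, ∃ V ∈ C i, PhaseEq U V) :
    (∃! i : Fin 5,
      ({x ∈ T | ∃ y ∈ C i, PhaseEq x y}).ncard = 3 ∧
      (∀ j, j ≠ i → ({x ∈ T | ∃ y ∈ C j, PhaseEq x y}).ncard = 1)) ∧
    (∀ i : Fin 5,
      (({x ∈ T | ∃ y ∈ C i, PhaseEq x y}).ncard = 3 ∧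
        (∀ j, j ≠ i → ({x ∈ T | ∃ y ∈ C j, PhaseEq x y}).ncard = 1)) →
      ∃ U V W : QMat 3, {x ∈ T | ∃ y ∈ C i, PhaseEq x y} = {U, V, W} ∧
        PhaseEq W (U * V)) := by
  have hshared (i : Fin 5) :
      {x ∈ T | ∃ y ∈ C i, PhaseEq x y}.ncard ≤ 1 ∨
        {x ∈ T | ∃ y ∈ C i, PhaseEq x y}.ncard = 3 ∧
          finrank (ZMod 2) ↥(labelSpan T ⊓ labelSpan (C i)) = 2 := by
    rw [hT.ncard_sep_phaseEq (hmax i)]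
    have := hT.finrank_inf_labelSpan_lt (hmax i) (hne i)
    interval_cases finrank (ZMod 2) ↥(labelSpan T ⊓ labelSpan (C i)) <;> simp
  have hsum : ∑ i, {x ∈ T | ∃ y ∈ C i, PhaseEq x y}.ncard = Fintype.card (Fin 5) + 2 := by
    rw [← ncard_eq_sum_ncard_sep_phaseEq hT.1 (fun i j => hdisj i j) hsub, hT.2.1]
    rfl
  refine ⟨exists_unique_eq_three_of_sum _ hsum (fun i => (hshared i).imp_right And.left)
      fun i j hi hj => by_contra fun hij => ?_,
    fun i hi => hT.exists_eq_triple_phaseEq_mul (hmax i) hi.1⟩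
  have hdims := hT.finrank_inf_add_finrank_inf_le (hmax i) (hmax j) (hdisj i j hij)
  have := hshared i
  have := hshared j
  omega
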